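/- Let 2 ≤ p < 3, let f = (f_1, ..., f_d) be vector fields on R^n of class C²_b, and let x solve x_{k+1} = x_k + Σ_μ f_μ(x_k)(w^μ_{k+1} − w^μ_k) driven by a time series w with lift 𝕎. Define I_{k,l} := (x_l − x_k) − Σ_μ f_μ(x_k)(w^μ_l − w^μ_k) and J^μ_{k,l} := f_μ(x_l) − f_μ(x_k) − Σ_ν Df_μ(x_k) f_ν(x_k)(w^ν_l − w^ν_k). Then max_{μ=1,...,d} ||J^μ||_{p/2;[k,l]} ≤ 2^{1−2/p} ||f||_{C²_b} ( ||I||^{p/2}_{p/2;[k,l]} + (1/2) ||x||^p_{p;[k,l]} )^{2/p}. -/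

import Mathlib

/-!
With `L = Df_μ(x_k)` one has `J^μ_{k,l} = (f_μ(x_l) - f_μ(x_k) - L(x_l - x_k)) + L I_{k,l}`, so
Taylor's formula gives `|J^μ_{k,l}| ≤ C |I_{k,l}| + (C/2) |x_l - x_k|²` with `C = ‖f‖_{C²_b}`.
Raising this to the power `q = p/2 ≥ 1` with `(a + b)^q ≤ 2^(q-1) (a^q + b^q)` and
`(1/2)^q ≤ 1/2` bounds `|J^μ_{k,l}|^q` by `2^(q-1) C^q (|I_{k,l}|^q + (1/2)|x_l - x_k|^p)`, and this
pointwise bound survives summation over any partition of `[k, l]`.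
-/

noncomputable section

/-- `s` is an increasing subsequence (partition) of `{k, …, l}` from `k` to `l`. -/
def IsPart (k l : ℕ) (s : List ℕ) : Prop :=
  s.Chain' (· < ·) ∧ s.head? = some k ∧ s.getLast? = some l

/-- Supremum over partitions of the sums of `p`-th powers of increments of a triangular array. -/
def pVarSum {E : Type*} [NormedAddCommGroup E] (p : ℝ) (Ξ : ℕ → ℕ → E) (k l : ℕ) : ℝ :=
  sSup { x : ℝ | ∃ s : List ℕ, IsPart k l s ∧
    x = ((s.zip s.tail).map fun ab => ‖Ξ ab.1 ab.2‖ ^ p).sum }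

/-- The `p`-variation of a triangular array over `[k,l]`. -/
def pVar {E : Type*} [NormedAddCommGroup E] (p : ℝ) (Ξ : ℕ → ℕ → E) (k l : ℕ) : ℝ :=
  pVarSum p Ξ k l ^ (1 / p)

/-- The `p`-variation of a time series over `[k,l]`. -/
def pVarSeq {E : Type*} [NormedAddCommGroup E] (p : ℝ) (x : ℕ → E) (k l : ℕ) : ℝ :=
  pVar p (fun a b => x b - x a) k l

/-- A discrete control on `{0, …, N}`: nonnegative, vanishing on the diagonal, superadditive. -/
def IsControl (N : ℕ) (ω : ℕ → ℕ → ℝ) : Prop :=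
  (∀ k l, k ≤ l → l ≤ N → 0 ≤ ω k l) ∧
  (∀ k, k ≤ N → ω k k = 0) ∧
  (∀ k l m, k < l → l < m → m ≤ N → ω k l + ω l m ≤ ω k m)

/-- The `C²_b` norm of a family of vector fields: `max_μ max(sup ‖Df_μ‖, sup ‖D²f_μ‖)`. -/
def C2bNormF {d n : ℕ} (f : Fin d → (Fin n → ℝ) → (Fin n → ℝ)) : ℝ :=
  max (⨆ μ, ⨆ y, ‖iteratedFDeriv ℝ 1 (f μ) y‖)
    (⨆ μ, ⨆ y, ‖iteratedFDeriv ℝ 2 (f μ) y‖)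

theorem Real.rpow_add_le_mul_rpow_add_rpow {a b q : ℝ} (ha : 0 ≤ a) (hb : 0 ≤ b) (hq : 1 ≤ q) :
    (a + b) ^ q ≤ 2 ^ (q - 1) * (a ^ q + b ^ q) := by
  lift a to NNReal using ha
  lift b to NNReal using hb
  exact_mod_cast NNReal.rpow_add_le_mul_rpow_add_rpow a b hq

theorem rpow_mul_add_half_mul_le {C u v q : ℝ} (hC : 0 ≤ C) (hu : 0 ≤ u) (hv : 0 ≤ v)
    (hq : 1 ≤ q) : (C * u + C / 2 * v) ^ q ≤ 2 ^ (q - 1) * C ^ q * (u ^ q + 1 / 2 * v ^ q) := by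
  have hhalf : (1 / 2 : ℝ) ^ q ≤ 1 / 2 := by
    simpa using Real.rpow_le_rpow_of_exponent_ge (by norm_num : (0 : ℝ) < 1 / 2)
      (by norm_num) hq
  calc (C * u + C / 2 * v) ^ q ≤ 2 ^ (q - 1) * ((C * u) ^ q + (C * (1 / 2 * v)) ^ q) := by
        rw [show C / 2 * v = C * (1 / 2 * v) by ring]
        exact Real.rpow_add_le_mul_rpow_add_rpow (by positivity) (by positivity) hq
    _ = 2 ^ (q - 1) * C ^ q * (u ^ q + (1 / 2) ^ q * v ^ q) := by
        rw [Real.mul_rpow hC hu, Real.mul_rpow hC (by positivity),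
          Real.mul_rpow (by norm_num) hv]
        ring
    _ ≤ 2 ^ (q - 1) * C ^ q * (u ^ q + 1 / 2 * v ^ q) := by gcongr

theorem le_ciSup_ciSup_of_finite {ι α : Type*} [Finite ι] {φ : ι → α → ℝ}
    (h : ∀ i, BddAbove (Set.range (φ i))) (i : ι) (a : α) : φ i a ≤ ⨆ i, ⨆ a, φ i a :=
  (le_ciSup (h i) a).trans (le_ciSup (f := fun i => ⨆ a, φ i a) (Set.finite_range _).bddAbove i)

namespace IsPart

variable {k l : ℕ} {s : List ℕ}

theorem pairwise (h : IsPart k l s) : s.Pairwise (· < ·) :=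
  List.isChain_iff_pairwise.mp h.1

theorem le_of_mem (h : IsPart k l s) {a : ℕ} (ha : a ∈ s) : a ≤ l := by
  obtain ⟨t, rfl⟩ := List.getLast?_eq_some_iff.mp h.2.2
  rcases List.mem_append.mp ha with ha | ha
  · exact ((List.pairwise_append.mp h.pairwise).2.2 a ha l (List.mem_singleton_self l)).le
  · exact (List.mem_singleton.mp ha).le

theorem length_le (h : IsPart k l s) : s.length ≤ l + 1 := by
  have hsub : s ⊆ List.range (l + 1) := fun a ha =>
    List.mem_range.mpr (Nat.lt_succ_of_le (h.le_of_mem ha))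
  simpa using (List.subperm_of_subset (h.pairwise.imp ne_of_lt) hsub).length_le

end IsPart

section pVarSum

variable {E F G : Type*} [NormedAddCommGroup E] [NormedAddCommGroup F] [NormedAddCommGroup G]
  {p : ℝ} {k l : ℕ}

theorem pVarSum_bddAbove (p : ℝ) (Ξ : ℕ → ℕ → E) (k l : ℕ) :
    BddAbove { x : ℝ | ∃ s : List ℕ, IsPart k l s ∧
      x = ((s.zip s.tail).map fun ab => ‖Ξ ab.1 ab.2‖ ^ p).sum } := by
  obtain ⟨M, hM⟩ := (((Set.finite_Iic l).prod (Set.finite_Iic l)).image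
    fun ab : ℕ × ℕ => ‖Ξ ab.1 ab.2‖ ^ p).bddAbove
  refine ⟨(l + 1) * max M 0, ?_⟩
  rintro _ ⟨s, hs, rfl⟩
  have hterm : ∀ y ∈ (s.zip s.tail).map (fun ab => ‖Ξ ab.1 ab.2‖ ^ p), y ≤ max M 0 := by
    simp only [List.mem_map]
    rintro _ ⟨ab, hab, rfl⟩
    obtain ⟨h1, h2⟩ := List.of_mem_zip hab
    exact le_max_of_le_left
      (hM ⟨ab, ⟨hs.le_of_mem h1, hs.le_of_mem (List.mem_of_mem_tail h2)⟩, rfl⟩)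
  have hlen : ((s.zip s.tail).length : ℝ) ≤ l + 1 := by
    rw [List.length_zip]
    exact_mod_cast (min_le_left _ _).trans hs.length_le
  calc _ ≤ ((s.zip s.tail).length : ℝ) * max M 0 := by
        simpa using List.sum_le_card_nsmul _ _ hterm
    _ ≤ (l + 1) * max M 0 := by gcongr

theorem le_pVarSum (Ξ : ℕ → ℕ → E) {s : List ℕ} (hs : IsPart k l s) :
    ((s.zip s.tail).map fun ab => ‖Ξ ab.1 ab.2‖ ^ p).sum ≤ pVarSum p Ξ k l :=
  le_csSup (pVarSum_bddAbove p Ξ k l) ⟨s, hs, rfl⟩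

theorem pVarSum_le (Ξ : ℕ → ℕ → E) {M : ℝ} (hkl : k ≤ l)
    (h : ∀ s, IsPart k l s → ((s.zip s.tail).map fun ab => ‖Ξ ab.1 ab.2‖ ^ p).sum ≤ M) :
    pVarSum p Ξ k l ≤ M := by
  have hne : ∃ s, IsPart k l s := by
    rcases hkl.eq_or_lt with rfl | hlt
    · exact ⟨[k], List.isChain_singleton k, rfl, rfl⟩
    · exact ⟨[k, l], List.isChain_pair.mpr hlt, rfl, rfl⟩
  obtain ⟨s₀, hs₀⟩ := hne
  exact csSup_le ⟨_, s₀, hs₀, rfl⟩ fun _ ⟨s, hs, hx⟩ => hx ▸ h s hs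

theorem pVarSum_nonneg (Ξ : ℕ → ℕ → E) : 0 ≤ pVarSum p Ξ k l := by
  refine Real.sSup_nonneg fun _ ⟨s, _, hx⟩ => hx ▸ List.sum_nonneg ?_
  simp only [List.mem_map]
  rintro _ ⟨ab, _, rfl⟩
  exact Real.rpow_nonneg (norm_nonneg _) p

theorem pVar_rpow (Ξ : ℕ → ℕ → E) (hp : p ≠ 0) : pVar p Ξ k l ^ p = pVarSum p Ξ k l := by
  rw [pVar, one_div, Real.rpow_inv_rpow (pVarSum_nonneg Ξ) hp]

theorem pVarSum_le_mul_add_mul (Ξ : ℕ → ℕ → E) (Φ : ℕ → ℕ → F) (Ψ : ℕ → ℕ → G) {q r α β : ℝ}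
    (hα : 0 ≤ α) (hβ : 0 ≤ β) (hkl : k ≤ l)
    (h : ∀ a b, ‖Ξ a b‖ ^ p ≤ α * ‖Φ a b‖ ^ q + β * ‖Ψ a b‖ ^ r) :
    pVarSum p Ξ k l ≤ α * pVarSum q Φ k l + β * pVarSum r Ψ k l := by
  refine pVarSum_le Ξ hkl fun s hs => ?_
  calc ((s.zip s.tail).map fun ab => ‖Ξ ab.1 ab.2‖ ^ p).sum
      ≤ ((s.zip s.tail).map fun ab =>
          α * ‖Φ ab.1 ab.2‖ ^ q + β * ‖Ψ ab.1 ab.2‖ ^ r).sum :=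
        List.sum_le_sum fun ab _ => h ab.1 ab.2
    _ = α * ((s.zip s.tail).map fun ab => ‖Φ ab.1 ab.2‖ ^ q).sum
          + β * ((s.zip s.tail).map fun ab => ‖Ψ ab.1 ab.2‖ ^ r).sum := by
        rw [List.sum_map_add, List.sum_map_mul_left, List.sum_map_mul_left]
    _ ≤ α * pVarSum q Φ k l + β * pVarSum r Ψ k l := by
        gcongr <;> exact le_pVarSum _ hs

theorem pVar_le_of_pVarSum_le (Ξ : ℕ → ℕ → E) {C S : ℝ} (hp : 0 < p) (hC : 0 ≤ C) (hS : 0 ≤ S)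
    (h : pVarSum p Ξ k l ≤ 2 ^ (p - 1) * C ^ p * S) :
    pVar p Ξ k l ≤ 2 ^ (1 - 1 / p) * C * S ^ (1 / p) := by
  calc pVar p Ξ k l ≤ (2 ^ (p - 1) * C ^ p * S) ^ (1 / p) := by
        rw [pVar]; gcongr; exact pVarSum_nonneg Ξ
    _ = 2 ^ (1 - 1 / p) * C * S ^ (1 / p) := by
        rw [Real.mul_rpow (by positivity) hS, Real.mul_rpow (by positivity) (by positivity),
          ← Real.rpow_mul zero_le_two, ← Real.rpow_mul hC, mul_one_div_cancel hp.ne',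
          Real.rpow_one]
        congr 2
        field_simp

end pVarSum

section Taylor

variable {E F : Type*} [NormedAddCommGroup E] [NormedSpace ℝ E] [NormedAddCommGroup F]
  [NormedSpace ℝ F] {g : E → F} {C : ℝ}

theorem norm_fderiv_fderiv_eq_norm_iteratedFDeriv_two (g : E → F) (y : E) :
    ‖fderiv ℝ (fderiv ℝ g) y‖ = ‖iteratedFDeriv ℝ 2 g y‖ := by
  rw [← norm_iteratedFDeriv_one, norm_iteratedFDeriv_fderiv]

theorem norm_fderiv_sub_fderiv_le (hg : ContDiff ℝ 2 g) (hC : ∀ y, ‖iteratedFDeriv ℝ 2 g y‖ ≤ C)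
    (a b : E) : ‖fderiv ℝ g b - fderiv ℝ g a‖ ≤ C * ‖b - a‖ :=
  Convex.norm_image_sub_le_of_norm_fderiv_le
    (fun _ _ => ((hg.fderiv_right (m := 1) le_rfl).differentiable one_ne_zero).differentiableAt)
    (fun y _ => (norm_fderiv_fderiv_eq_norm_iteratedFDeriv_two g y).trans_le (hC y))
    convex_univ (Set.mem_univ a) (Set.mem_univ b)

theorem norm_image_sub_sub_fderiv_le (hg : ContDiff ℝ 2 g)
    (hC : ∀ y, ‖iteratedFDeriv ℝ 2 g y‖ ≤ C) (a b : E) :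
    ‖g b - g a - fderiv ℝ g a (b - a)‖ ≤ C / 2 * ‖b - a‖ ^ 2 := by
  set v := b - a
  set φ : ℝ → F := fun t => g (a + t • v) - g a - t • fderiv ℝ g a v
  have hφ : ∀ t, HasDerivAt φ (fderiv ℝ g (a + t • v) v - fderiv ℝ g a v) t := by
    intro t
    have hline : HasDerivAt (fun s : ℝ => a + s • v) v t := by
      simpa using ((hasDerivAt_id t).smul_const v).const_add a
    have hgt := ((hg.differentiable two_ne_zero).differentiableAt (x := a + t • v)).hasFDerivAt
    have hlin : HasDerivAt (fun s : ℝ => s • fderiv ℝ g a v) (fderiv ℝ g a v) t := by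
      simpa using (hasDerivAt_id t).smul_const (fderiv ℝ g a v)
    exact ((hgt.comp_hasDerivAt t hline).sub_const (g a)).sub hlin
  have hB : ∀ t, HasDerivAt (fun s : ℝ => C / 2 * ‖v‖ ^ 2 * s ^ 2) (C * ‖v‖ ^ 2 * t) t := by
    intro t
    refine ((hasDerivAt_pow 2 t).const_mul (C / 2 * ‖v‖ ^ 2)).congr_deriv ?_
    push_cast
    ring
  have hφ' : ∀ t ∈ Set.Ico (0 : ℝ) 1,
      ‖fderiv ℝ g (a + t • v) v - fderiv ℝ g a v‖ ≤ C * ‖v‖ ^ 2 * t := by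
    rintro t ⟨ht, -⟩
    calc ‖fderiv ℝ g (a + t • v) v - fderiv ℝ g a v‖
        ≤ ‖fderiv ℝ g (a + t • v) - fderiv ℝ g a‖ * ‖v‖ := by
          rw [← sub_apply]; exact ContinuousLinearMap.le_opNorm _ _
      _ ≤ C * ‖(a + t • v) - a‖ * ‖v‖ := by gcongr; exact norm_fderiv_sub_fderiv_le hg hC _ _
      _ = C * ‖v‖ ^ 2 * t := by
          rw [add_sub_cancel_left, norm_smul, Real.norm_of_nonneg ht]; ring
  -- `φ` starts at `0` and its derivative is dominated by that of the parabola `(C/2)‖v‖²t²`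
  have key := image_norm_le_of_norm_deriv_right_le_deriv_boundary
    (fun t _ => (hφ t).continuousAt.continuousWithinAt) (fun t _ => (hφ t).hasDerivWithinAt)
    (by simp [φ]) hB hφ' (Set.right_mem_Icc.mpr zero_le_one)
  simpa [φ, v] using key

theorem norm_image_sub_sub_fderiv_sub_le (hg : ContDiff ℝ 2 g)
    (hC₁ : ∀ y, ‖fderiv ℝ g y‖ ≤ C) (hC₂ : ∀ y, ‖iteratedFDeriv ℝ 2 g y‖ ≤ C) (a b e : E) :
    ‖g b - g a - fderiv ℝ g a (b - a - e)‖ ≤ C * ‖e‖ + C / 2 * ‖b - a‖ ^ 2 := by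
  have hsplit : g b - g a - fderiv ℝ g a (b - a - e) =
      (g b - g a - fderiv ℝ g a (b - a)) + fderiv ℝ g a e := by
    rw [map_sub]; abel
  rw [hsplit, add_comm (C * ‖e‖)]
  exact norm_add_le_of_le (norm_image_sub_sub_fderiv_le hg hC₂ a b)
    ((fderiv ℝ g a).le_of_opNorm_le (hC₁ a) e)

theorem norm_image_sub_sub_fderiv_sub_rpow_le {q : ℝ} (hg : ContDiff ℝ 2 g) (hC₁ : ∀ y, ‖fderiv ℝ g y‖ ≤ C)
    (hC₂ : ∀ y, ‖iteratedFDeriv ℝ 2 g y‖ ≤ C) (hq : 1 ≤ q) (a b e : E) :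
    ‖g b - g a - fderiv ℝ g a (b - a - e)‖ ^ q ≤
      2 ^ (q - 1) * C ^ q * ‖e‖ ^ q + 2 ^ (q - 1) * C ^ q / 2 * ‖b - a‖ ^ (2 * q) := by
  have hC : 0 ≤ C := (norm_nonneg _).trans (hC₁ a)
  calc ‖g b - g a - fderiv ℝ g a (b - a - e)‖ ^ q
      ≤ (C * ‖e‖ + C / 2 * ‖b - a‖ ^ 2) ^ q := by
        gcongr
        exact norm_image_sub_sub_fderiv_sub_le hg hC₁ hC₂ a b e
    _ ≤ 2 ^ (q - 1) * C ^ q * (‖e‖ ^ q + 1 / 2 * (‖b - a‖ ^ 2) ^ q) :=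
        rpow_mul_add_half_mul_le hC (norm_nonneg _) (by positivity) hq
    _ = _ := by
        rw [← Real.rpow_natCast, ← Real.rpow_mul (norm_nonneg _)]
        push_cast
        ring

end Taylor

section C2bNormF

variable {d n : ℕ} {f : Fin d → (Fin n → ℝ) → (Fin n → ℝ)}

theorem norm_fderiv_le_C2bNormF (hfb : ∀ μ, ∃ C : ℝ, ∀ y, ‖iteratedFDeriv ℝ 1 (f μ) y‖ ≤ C)
    (μ : Fin d) (y : Fin n → ℝ) : ‖fderiv ℝ (f μ) y‖ ≤ C2bNormF f := by
  rw [← norm_iteratedFDeriv_one]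
  exact (le_ciSup_ciSup_of_finite (φ := fun μ y => ‖iteratedFDeriv ℝ 1 (f μ) y‖)
    (fun μ => (hfb μ).imp fun _ hC => Set.forall_mem_range.2 hC) μ y).trans (le_max_left _ _)

theorem norm_iteratedFDeriv_two_le_C2bNormF
    (hfb : ∀ μ, ∃ C : ℝ, ∀ y, ‖iteratedFDeriv ℝ 2 (f μ) y‖ ≤ C) (μ : Fin d) (y : Fin n → ℝ) :
    ‖iteratedFDeriv ℝ 2 (f μ) y‖ ≤ C2bNormF f :=
  (le_ciSup_ciSup_of_finite (φ := fun μ y => ‖iteratedFDeriv ℝ 2 (f μ) y‖)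
    (fun μ => (hfb μ).imp fun _ hC => Set.forall_mem_range.2 hC) μ y).trans (le_max_right _ _)

end C2bNormF

theorem rough_J_bound_general (d n N : ℕ) (p : ℝ) (hp1 : 2 ≤ p)
    (f : Fin d → (Fin n → ℝ) → (Fin n → ℝ))
    (hf : ∀ μ, ContDiff ℝ 2 (f μ))
    (hfb : ∀ μ, ∀ j : ℕ, j ≤ 2 → ∃ C : ℝ, ∀ y, ‖iteratedFDeriv ℝ j (f μ) y‖ ≤ C)
    (w : ℕ → Fin d → ℝ) (x : ℕ → Fin n → ℝ)
    (I : ℕ → ℕ → Fin n → ℝ)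
    (hI : ∀ k l, I k l = x l - x k - ∑ μ : Fin d, (w l μ - w k μ) • f μ (x k))
    (J : Fin d → ℕ → ℕ → Fin n → ℝ)
    (hJ : ∀ μ k l, J μ k l = f μ (x l) - f μ (x k) -
      ∑ ν : Fin d, (w l ν - w k ν) • fderiv ℝ (f μ) (x k) (f ν (x k))) :
    ∀ k l : ℕ, k ≤ l → l ≤ N → ∀ μ : Fin d,
      pVar (p / 2) (J μ) k l ≤
        2 ^ (1 - 2 / p) * C2bNormF f *
          (pVar (p / 2) I k l ^ (p / 2) + (1 / 2) * pVarSeq p x k l ^ p) ^ (2 / p) := by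
  intro k l hkl _ μ
  set C := C2bNormF f
  set q := p / 2
  have hq : 1 ≤ q := by simp only [q]; linarith
  have hC₁ := norm_fderiv_le_C2bNormF fun ν => hfb ν 1 one_le_two
  have hC₂ := norm_iteratedFDeriv_two_le_C2bNormF fun ν => hfb ν 2 le_rfl
  have hC : 0 ≤ C := (norm_nonneg _).trans (hC₂ μ 0)
  have hpt : ∀ a b, ‖J μ a b‖ ^ q ≤
      2 ^ (q - 1) * C ^ q * ‖I a b‖ ^ q + 2 ^ (q - 1) * C ^ q / 2 * ‖x b - x a‖ ^ p := by
    intro a b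
    have hJI : J μ a b =
        f μ (x b) - f μ (x a) - fderiv ℝ (f μ) (x a) (x b - x a - I a b) := by
      simp only [hJ, hI, sub_sub_cancel, map_sum, map_smul]
    rw [hJI, show p = 2 * q by simp only [q]; ring]
    exact norm_image_sub_sub_fderiv_sub_rpow_le (hf μ) (hC₁ μ) (hC₂ μ) hq _ _ _
  have hA : 0 ≤ pVarSum q I k l := pVarSum_nonneg I
  have hB : 0 ≤ pVarSum p (fun a b => x b - x a) k l := pVarSum_nonneg _
  have hsum := pVarSum_le_mul_add_mul (J μ) I (fun a b => x b - x a) (by positivity)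
    (by positivity) hkl hpt
  calc pVar q (J μ) k l
      ≤ 2 ^ (1 - 1 / q) * C *
          (pVarSum q I k l + 1 / 2 * pVarSum p (fun a b => x b - x a) k l) ^ (1 / q) :=
        pVar_le_of_pVarSum_le _ (by positivity) hC (by positivity) (by linarith)
    _ = _ := by
        rw [one_div_div, pVar_rpow I (by positivity), pVarSeq, pVar_rpow _ (by positivity)]

/-- Bound on the `p/2`-variation of the rough-regime remainders
`J^μ_{k,l} = f_μ(x_l) − f_μ(x_k) − Σ_ν Df_μ(x_k) f_ν(x_k) w^ν_{k,l}`. -/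
theorem rough_J_bound (d n N : ℕ) (p : ℝ) (hp1 : 2 ≤ p) (hp2 : p < 3)
    (f : Fin d → (Fin n → ℝ) → (Fin n → ℝ))
    (hf : ∀ μ, ContDiff ℝ 2 (f μ))
    (hfb : ∀ μ, ∀ j : ℕ, j ≤ 2 → ∃ C : ℝ, ∀ y, ‖iteratedFDeriv ℝ j (f μ) y‖ ≤ C)
    (w : ℕ → Fin d → ℝ) (x : ℕ → Fin n → ℝ)
    (hstep : ∀ k : ℕ, k < N →
      x (k + 1) = x k + ∑ μ : Fin d, (w (k + 1) μ - w k μ) • f μ (x k))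
    (I : ℕ → ℕ → Fin n → ℝ)
    (hI : ∀ k l, I k l = x l - x k - ∑ μ : Fin d, (w l μ - w k μ) • f μ (x k))
    (J : Fin d → ℕ → ℕ → Fin n → ℝ)
    (hJ : ∀ μ k l, J μ k l = f μ (x l) - f μ (x k) -
      ∑ ν : Fin d, (w l ν - w k ν) • fderiv ℝ (f μ) (x k) (f ν (x k))) :
    ∀ k l : ℕ, k ≤ l → l ≤ N → ∀ μ : Fin d,
      pVar (p / 2) (J μ) k l ≤
        2 ^ (1 - 2 / p) * C2bNormF f *
          (pVar (p / 2) I k l ^ (p / 2) + (1 / 2) * pVarSeq p x k l ^ p) ^ (2 / p) :=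
  rough_J_bound_general d n N p hp1 f hf hfb w x I hI J hJ
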